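/- Let E be an effect algebra equipped with a compression base (J_p)_{p∈P} that has the projection cover property. Then for every a∈E, the projection cover a° belongs to the P-bicommutant P(a). -/

import Mathlib

universe u

/-- An effect algebra: the partially defined sum `⊕` is encoded via `Option`. -/
class EffectAlgebra (E : Type u) where
  oplus : E → E → Option E
  zero : E
  one : E
  oplus_comm : ∀ a b : E, oplus a b = oplus b a
  oplus_assoc : ∀ {a b c ab abc : E}, oplus a b = some ab → oplus ab c = some abc →
    ∃ bc : E, oplus b c = some bc ∧ oplus a bc = some abc
  exists_perp : ∀ a : E, ∃ b : E, oplus a b = some one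
  perp_unique : ∀ {a b c : E}, oplus a b = some one → oplus a c = some one → b = c
  oplus_one : ∀ {a b : E}, oplus a one = some b → a = zero

namespace EffectAlgebra

variable {E : Type u} [EffectAlgebra E]

/-- The orthosupplement `a^⊥`. -/
noncomputable def perp (a : E) : E := Classical.choose (exists_perp a)

/-- The partial order: `a ≤ b` iff `a ⊕ c = b` for some `c`. -/
def le (a b : E) : Prop := ∃ c : E, oplus a c = some b

/-- Sharp elements. -/
def Sharp (a : E) : Prop := ∀ x : E, le x a → le x (perp a) → x = zero

/-- Finite orthosums of lists of elements. -/
def osum : List E → Option E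
  | [] => some zero
  | a :: l => (osum l).bind fun s => oplus a s

/-- Mackey compatibility `a ↔ b`. -/
def MCompat (a b : E) : Prop :=
  ∃ a₁ b₁ c s t : E, oplus a₁ b₁ = some s ∧ oplus s c = some t ∧
    oplus a₁ c = some a ∧ oplus b₁ c = some b

/-- `a` is the supremum of the sequence `f`. -/
def IsSupSeq (f : ℕ → E) (a : E) : Prop :=
  (∀ n, le (f n) a) ∧ ∀ b : E, (∀ n, le (f n) b) → le a b

/-- `a` is the infimum of the sequence `f`. -/
def IsInfSeq (f : ℕ → E) (a : E) : Prop :=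
  (∀ n, le a (f n)) ∧ ∀ b : E, (∀ n, le b (f n)) → le b a

/-- `a` is the infimum of the set `S`. -/
def IsInfSet (S : Set E) (a : E) : Prop :=
  (∀ x ∈ S, le a x) ∧ ∀ b : E, (∀ x ∈ S, le b x) → le b a

/-- `a` is the supremum of `f` computed inside the subset `S`. -/
def IsSupSeqIn (S : Set E) (f : ℕ → E) (a : E) : Prop :=
  a ∈ S ∧ (∀ n, le (f n) a) ∧ ∀ b ∈ S, (∀ n, le (f n) b) → le a b

variable (E) in
/-- Monotone σ-completeness: every ascending sequence has a supremum. -/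
def MonotoneSigmaComplete : Prop :=
  ∀ f : ℕ → E, (∀ n, le (f n) (f (n + 1))) → ∃ a : E, IsSupSeq f a

end EffectAlgebra

open EffectAlgebra in
/-- A compression base `(J_p)_{p ∈ P}` on an effect algebra. -/
structure CompressionBase (E : Type u) [EffectAlgebra E] where
  P : Set E
  J : E → E → E
  zero_mem : zero ∈ P
  one_mem : one ∈ P
  perp_mem : ∀ p ∈ P, perp p ∈ P
  oplus_mem : ∀ p ∈ P, ∀ q ∈ P, ∀ r : E, oplus p q = some r → r ∈ P
  normal : ∀ e f d s t x y : E, oplus e f = some s → oplus s d = some t →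
    oplus e d = some x → x ∈ P → oplus f d = some y → y ∈ P → d ∈ P
  additive : ∀ p ∈ P, ∀ a b c : E, oplus a b = some c →
    oplus (J p a) (J p b) = some (J p c)
  retraction : ∀ p ∈ P, ∀ a : E, le a p → J p a = a
  focus : ∀ p ∈ P, J p one = p
  compression : ∀ p ∈ P, ∀ a : E, (J p a = zero ↔ le a (perp p))
  compose : ∀ p ∈ P, ∀ q ∈ P, ∀ r ∈ P, ∀ s t qr : E,
    oplus p q = some s → oplus s r = some t → oplus q r = some qr →
    ∀ a : E, J s (J qr a) = J q a

namespace CompressionBase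

open EffectAlgebra

variable {E : Type u} [EffectAlgebra E] (cb : CompressionBase E)

/-- The commutant `C(p)` of a projection `p`. -/
noncomputable def Cset (p : E) : Set E :=
  {a : E | oplus (cb.J p a) (cb.J (perp p) a) = some a}

/-- `PC(a)`: projections compatible with `a`. -/
noncomputable def PC (a : E) : Set E := {p : E | p ∈ cb.P ∧ a ∈ cb.Cset p}

/-- The P-bicommutant `P(a) = PC(PC(a) ∪ {a})`. -/
noncomputable def Pbicomm (a : E) : Set E :=
  {p : E | p ∈ cb.P ∧ a ∈ cb.Cset p ∧ ∀ q ∈ cb.PC a, q ∈ cb.Cset p}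

/-- `p` is the projection cover of `a`. -/
def IsProjCover (a p : E) : Prop :=
  p ∈ cb.P ∧ ∀ q ∈ cb.P, (le a q ↔ le p q)

/-- The projection cover property. -/
def ProjCoverProp : Prop := ∀ a : E, ∃ p : E, cb.IsProjCover a p

/-- `B` is a Boolean subalgebra of the set of projections. -/
noncomputable def BooleanSub (B : Set E) : Prop :=
  B ⊆ cb.P ∧ zero ∈ B ∧ one ∈ B ∧ (∀ p ∈ B, perp p ∈ B) ∧
  (∀ p ∈ B, ∀ q ∈ B, MCompat p q) ∧
  (∀ p ∈ B, ∀ q ∈ B, ∀ r : E, oplus p q = some r → r ∈ B)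

/-- The b-property. -/
noncomputable def BProperty : Prop :=
  ∀ a : E, ∃ B : Set E, cb.BooleanSub B ∧
    ∀ p ∈ cb.P, (a ∈ cb.Cset p ↔ ∀ b ∈ B, b ∈ cb.Cset p)

/-- Commutativity `aCb` of b-elements. -/
noncomputable def CommuteC (a b : E) : Prop :=
  ∀ p ∈ cb.Pbicomm a, ∀ q ∈ cb.Pbicomm b, MCompat p q

/-- The b-comparability property. -/
noncomputable def BComparability : Prop :=
  cb.BProperty ∧
  ∀ e f : E, cb.CommuteC e f → ∃ p : E, p ∈ cb.Pbicomm e ∧ p ∈ cb.Pbicomm f ∧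
    le (cb.J p e) (cb.J p f) ∧ le (cb.J (perp p) f) (cb.J (perp p) e)

/-- Spectrality: projection cover property plus b-comparability. -/
noncomputable def Spectral : Prop := cb.ProjCoverProp ∧ cb.BComparability

/-- `p` is the floor of `a` (the largest projection below `a`). -/
def IsFloor (a p : E) : Prop :=
  p ∈ cb.P ∧ le p a ∧ ∀ q ∈ cb.P, le q a → le q p

end CompressionBase

open EffectAlgebra in
/-- A sequential effect algebra (SEA). -/
class SEA (E : Type u) [EffectAlgebra E] where
  seq : E → E → E
  seq_oplus : ∀ a b c d : E, oplus b c = some d →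
    oplus (seq a b) (seq a c) = some (seq a d)
  one_seq : ∀ a : E, seq one a = a
  seq_zero_symm : ∀ a b : E, seq a b = zero → seq b a = zero
  comm_perp : ∀ a b : E, seq a b = seq b a → seq a (perp b) = seq (perp b) a
  comm_assoc : ∀ a b c : E, seq a b = seq b a → seq a (seq b c) = seq (seq a b) c
  comm_seq : ∀ a b c : E, seq c a = seq a c → seq c b = seq b c →
    seq c (seq a b) = seq (seq a b) c
  comm_oplus : ∀ a b c d : E, seq c a = seq a c → seq c b = seq b c →
    oplus a b = some d → seq c d = seq d c

namespace EffectAlgebra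

variable {E : Type u} [EffectAlgebra E]

section SEAdefs

variable [SEA E]

/-- `a | b` : the sequential product commutes. -/
def Commutes (a b : E) : Prop := SEA.seq a b = SEA.seq b a

/-- The commutant `S'` of a subset. -/
def commutant (S : Set E) : Set E := {a : E | ∀ s ∈ S, Commutes a s}

/-- The bicommutant `S''`. -/
def bicommutant (S : Set E) : Set E := commutant (commutant S)

/-- A sub-SEA: a sub-effect algebra closed under the sequential product. -/
noncomputable def SubSEA (S : Set E) : Prop :=
  zero ∈ S ∧ one ∈ S ∧ (∀ a ∈ S, perp a ∈ S) ∧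
  (∀ a ∈ S, ∀ b ∈ S, ∀ c : E, oplus a b = some c → c ∈ S) ∧
  (∀ a ∈ S, ∀ b ∈ S, SEA.seq a b ∈ S)

/-- A commutative sub-SEA. -/
noncomputable def CommSubSEA (S : Set E) : Prop :=
  SubSEA S ∧ ∀ a ∈ S, ∀ b ∈ S, Commutes a b

/-- A maximal commutative sub-SEA. -/
noncomputable def MaxCommSubSEA (S : Set E) : Prop :=
  CommSubSEA S ∧ ∀ T : Set E, CommSubSEA T → S ⊆ T → T = S

/-- `C(p)` for the canonical compression base `J_p = p ∘ ·` of a SEA. -/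
noncomputable def sC (p : E) : Set E :=
  {a : E | oplus (SEA.seq p a) (SEA.seq (perp p) a) = some a}

/-- `PC(a)` for the canonical compression base. -/
noncomputable def sPC (a : E) : Set E := {p : E | Sharp p ∧ a ∈ sC p}

/-- The P-bicommutant `P(a)` for the canonical compression base. -/
noncomputable def sPbicomm (a : E) : Set E :=
  {p : E | Sharp p ∧ a ∈ sC p ∧ ∀ q ∈ sPC a, q ∈ sC p}

/-- `p` is the projection cover of `a` (canonical compression base). -/
noncomputable def sIsProjCover (a p : E) : Prop :=
  Sharp p ∧ ∀ q : E, Sharp q → (le a q ↔ le p q)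

variable (E) in
/-- The projection cover property (canonical compression base). -/
noncomputable def sProjCoverProp : Prop := ∀ a : E, ∃ p : E, sIsProjCover a p

/-- `B` is a Boolean subalgebra of the sharp elements. -/
noncomputable def sBooleanSub (B : Set E) : Prop :=
  (∀ p ∈ B, Sharp p) ∧ zero ∈ B ∧ one ∈ B ∧ (∀ p ∈ B, perp p ∈ B) ∧
  (∀ p ∈ B, ∀ q ∈ B, MCompat p q) ∧
  (∀ p ∈ B, ∀ q ∈ B, ∀ r : E, oplus p q = some r → r ∈ B)

variable (E) in
/-- The b-property (canonical compression base). -/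
noncomputable def sBProperty : Prop :=
  ∀ a : E, ∃ B : Set E, sBooleanSub B ∧
    ∀ p : E, Sharp p → (a ∈ sC p ↔ ∀ b ∈ B, b ∈ sC p)

/-- `aCb` (canonical compression base). -/
noncomputable def sCommuteC (a b : E) : Prop :=
  ∀ p ∈ sPbicomm a, ∀ q ∈ sPbicomm b, MCompat p q

variable (E) in
/-- The b-comparability property (canonical compression base). -/
noncomputable def sBComparability : Prop :=
  sBProperty E ∧
  ∀ e f : E, sCommuteC e f → ∃ p : E, p ∈ sPbicomm e ∧ p ∈ sPbicomm f ∧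
    le (SEA.seq p e) (SEA.seq p f) ∧
    le (SEA.seq (perp p) f) (SEA.seq (perp p) e)

variable (E) in
/-- Spectrality of a SEA with respect to its canonical compression base. -/
noncomputable def sSpectral : Prop := sProjCoverProp E ∧ sBComparability E

/-- `p` is the floor of `a` (canonical compression base). -/
noncomputable def sIsFloor (a p : E) : Prop :=
  Sharp p ∧ le p a ∧ ∀ q : E, Sharp q → le q a → le q p

variable (E) in
/-- Property A. -/
def PropertyA : Prop :=
  ∀ (f : ℕ → E) (a b : E), (∀ n, le (f n) (f (n + 1))) →
    (∀ m n, Commutes (f m) (f n)) → IsSupSeq f a →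
    (∀ n, Commutes (f n) b) → Commutes a b

variable (E) in
/-- A σ-SEA. -/
def SigmaSEA : Prop :=
  MonotoneSigmaComplete E ∧
  ∀ (f : ℕ → E) (m : E), (∀ n, le (f (n + 1)) (f n)) → IsInfSeq f m →
    ∀ b : E, IsInfSeq (fun n => SEA.seq b (f n)) (SEA.seq b m) ∧
      ((∀ n, Commutes b (f n)) → Commutes b m)

/-- Iterated sequential powers: `seqPow a n = a^(n+1)`. -/
def seqPow (a : E) : ℕ → E
  | 0 => a
  | n + 1 => SEA.seq a (seqPow a n)

end SEAdefs

end EffectAlgebra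

open EffectAlgebra in
/-- A convex effect algebra: scalar multiplication by reals in `[0,1]`. -/
class ConvexEA (E : Type u) [EffectAlgebra E] where
  smul : ℝ → E → E
  smul_smul : ∀ (l m : ℝ) (a : E), 0 ≤ l → l ≤ 1 → 0 ≤ m → m ≤ 1 →
    smul m (smul l a) = smul (l * m) a
  smul_add_coeff : ∀ (l m : ℝ) (a : E), 0 ≤ l → 0 ≤ m → l + m ≤ 1 →
    oplus (smul l a) (smul m a) = some (smul (l + m) a)
  smul_oplus : ∀ (l : ℝ) (a b c : E), 0 ≤ l → l ≤ 1 → oplus a b = some c →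
    oplus (smul l a) (smul l b) = some (smul l c)
  one_smul : ∀ a : E, smul 1 a = a

namespace EffectAlgebra

variable {E : Type u} [EffectAlgebra E]

section Convexdefs

variable [ConvexEA E]

variable (E) in
/-- Strong archimedeanity. -/
def StronglyArchimedean : Prop :=
  ∀ a b c : E,
    (∀ n : ℕ, ∃ d : E, oplus b (ConvexEA.smul (1 / (n + 1) : ℝ) c) = some d ∧ le a d) →
    le a b

/-- `DistLE a b ε` encodes `‖a - b‖ ≤ ε` in the order unit norm:
`(1/2)a ≤ (1/2)b ⊕ (ε/2)1` and symmetrically (with `ε` clamped to `[0,1]`). -/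
def DistLE (a b : E) (ε : ℝ) : Prop :=
  (∃ d : E, oplus (ConvexEA.smul (2⁻¹ : ℝ) b) (ConvexEA.smul (min ε 1 / 2) one) = some d ∧
    le (ConvexEA.smul (2⁻¹ : ℝ) a) d) ∧
  (∃ d : E, oplus (ConvexEA.smul (2⁻¹ : ℝ) a) (ConvexEA.smul (min ε 1 / 2) one) = some d ∧
    le (ConvexEA.smul (2⁻¹ : ℝ) b) d)

/-- Norm convergence of a sequence. -/
def NormLimit (f : ℕ → E) (a : E) : Prop :=
  ∀ ε : ℝ, 0 < ε → ∃ N : ℕ, ∀ n ≥ N, DistLE (f n) a ε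

/-- Cauchy sequences with respect to the order unit norm. -/
def CauchySeqE (f : ℕ → E) : Prop :=
  ∀ ε : ℝ, 0 < ε → ∃ N : ℕ, ∀ m ≥ N, ∀ n ≥ N, DistLE (f m) (f n) ε

variable (E) in
/-- Norm completeness. -/
def NormComplete : Prop := ∀ f : ℕ → E, CauchySeqE f → ∃ a : E, NormLimit f a

/-- A norm-closed subset. -/
def NormClosedSet (S : Set E) : Prop :=
  ∀ (f : ℕ → E) (a : E), (∀ n, f n ∈ S) → NormLimit f a → a ∈ S

/-- A norm-complete subset. -/
def NormCompleteSet (S : Set E) : Prop :=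
  ∀ f : ℕ → E, (∀ n, f n ∈ S) → CauchySeqE f → ∃ a ∈ S, NormLimit f a

/-- One-dimensional elements. -/
def OneDim (a : E) : Prop :=
  ∀ b : E, le b a → ∃ t : ℝ, 0 ≤ t ∧ t ≤ 1 ∧ b = ConvexEA.smul t a

/-- `l` is a representation of `a` as a simple element:
`a = ⊕ μ_i p_i` with `μ_i ∈ [0,1]`, `p_i` sharp and `⊕ p_i = 1`. -/
noncomputable def SimpleRep (a : E) (l : List (ℝ × E)) : Prop :=
  (∀ x ∈ l, x.1 ∈ Set.Icc (0 : ℝ) 1 ∧ Sharp x.2) ∧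
  osum (l.map Prod.snd) = some one ∧
  osum (l.map fun x => ConvexEA.smul x.1 x.2) = some a

/-- Simple elements. -/
noncomputable def SimpleElem (a : E) : Prop := ∃ l : List (ℝ × E), SimpleRep a l

/-- A reduced representation: strictly increasing coefficients, nonzero sharp elements. -/
noncomputable def ReducedRep (a : E) (l : List (ℝ × E)) : Prop :=
  SimpleRep a l ∧ (l.map Prod.fst).Chain' (· < ·) ∧ ∀ x ∈ l, x.2 ≠ zero

end Convexdefs

section SpecRes

variable [SEA E] [ConvexEA E]

/-- `p` is the spectral resolution of `a` (canonical compression base): a family of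
projections in the bicommutant of `a`, nondecreasing and right continuous on `[0,1]`,
with `J_{p_λ}(a) ≤ λ p_λ` and `λ p_λ^⊥ ≤ J_{p_λ^⊥}(a)`. -/
noncomputable def sIsSpecRes (a : E) (p : ℝ → E) : Prop :=
  (∀ l : ℝ, 0 ≤ l → l ≤ 1 → p l ∈ sPbicomm a) ∧
  (∀ l m : ℝ, 0 ≤ l → l ≤ m → m ≤ 1 → le (p l) (p m)) ∧
  (∀ l : ℝ, 0 ≤ l → l < 1 →
    IsInfSet {x : E | ∃ m : ℝ, l < m ∧ m ≤ 1 ∧ x = p m} (p l)) ∧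
  (∀ l : ℝ, 0 ≤ l → l ≤ 1 →
    le (SEA.seq (p l) a) (ConvexEA.smul l (p l)) ∧
    le (ConvexEA.smul l (perp (p l))) (SEA.seq (perp (p l)) a))

end SpecRes

end EffectAlgebra

namespace CompressionBase

open EffectAlgebra

variable {E : Type u} [EffectAlgebra E] [ConvexEA E] (cb : CompressionBase E)

/-- `p` is the spectral resolution of `a` with respect to the compression base `cb`. -/
noncomputable def IsSpecRes (a : E) (p : ℝ → E) : Prop :=
  (∀ l : ℝ, 0 ≤ l → l ≤ 1 → p l ∈ cb.Pbicomm a) ∧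
  (∀ l m : ℝ, 0 ≤ l → l ≤ m → m ≤ 1 → le (p l) (p m)) ∧
  (∀ l : ℝ, 0 ≤ l → l < 1 →
    IsInfSet {x : E | ∃ m : ℝ, l < m ∧ m ≤ 1 ∧ x = p m} (p l)) ∧
  (∀ l : ℝ, 0 ≤ l → l ≤ 1 →
    le (cb.J (p l) a) (ConvexEA.smul l (p l)) ∧
    le (ConvexEA.smul l (perp (p l))) (cb.J (perp (p l)) a))

end CompressionBase

/-!
Write `a = a₁ ⊕ a₂` with `a₁ = J_q a ≤ q` and `a₂ = J_{q^⊥} a ≤ q^⊥` for `q ∈ PC(a)`, and let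
`r = a₁°`, `s = a₂°`. Then `r ≤ q`, `s ≤ q^⊥`, so `r ⊕ s` is a projection above `a`, whence
`r ≤ a° ≤ r ⊕ s`. Writing `a° = r ⊕ w` and `q = r ⊕ y`, we get `w ≤ s ≤ q^⊥`, so
`y ⊕ a° = q ⊕ w` is defined and `y ≤ a°^⊥`. Thus `q` splits into a part below `a°` and a part
below `a°^⊥`, which is exactly `q ∈ C(a°)`.
-/

namespace EffectAlgebra

variable {E : Type u} [EffectAlgebra E]

lemma oplus_perp (a : E) : oplus a (perp a) = some one :=
  Classical.choose_spec (exists_perp a)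

lemma perp_oplus (a : E) : oplus (perp a) a = some one := by
  rw [oplus_comm]; exact oplus_perp a

lemma one_oplus_zero : oplus (one : E) zero = some one := by
  obtain ⟨b, hb⟩ := exists_perp (one : E)
  have hb0 : b = zero := oplus_one (by rw [oplus_comm]; exact hb)
  rwa [hb0] at hb

lemma perp_perp (a : E) : perp (perp a) = a :=
  perp_unique (oplus_perp (perp a)) (perp_oplus a)

lemma oplus_zero (a : E) : oplus a zero = some a := by
  obtain ⟨b, hb, hab⟩ := oplus_assoc (perp_oplus a) one_oplus_zero
  have hba : b = a := perp_unique hab (perp_oplus a)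
  rwa [hba] at hb

lemma zero_oplus (a : E) : oplus zero a = some a := by
  rw [oplus_comm]; exact oplus_zero a

protected lemma le_refl (a : E) : le a a := ⟨zero, oplus_zero a⟩

protected lemma zero_le (a : E) : le zero a := ⟨a, zero_oplus a⟩

protected lemma le_trans {a b c : E} (hab : le a b) (hbc : le b c) : le a c := by
  obtain ⟨x, hx⟩ := hab
  obtain ⟨y, hy⟩ := hbc
  obtain ⟨xy, -, h⟩ := oplus_assoc hx hy
  exact ⟨xy, h⟩

lemma oplus_assoc_symm {a b c bc abc : E} (hbc : oplus b c = some bc)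
    (habc : oplus a bc = some abc) : ∃ ab, oplus a b = some ab ∧ oplus ab c = some abc := by
  rw [oplus_comm] at hbc habc
  obtain ⟨ba, hba, hcba⟩ := oplus_assoc hbc habc
  rw [oplus_comm] at hba hcba
  exact ⟨ba, hba, hcba⟩

lemma oplus_left_cancel {a b c d : E} (hb : oplus a b = some d) (hc : oplus a c = some d) :
    b = c := by
  -- both `b` and `c` are the orthosupplement of `d^⊥ ⊕ a`
  obtain ⟨b', hb', hab'⟩ := oplus_assoc hb (oplus_perp d)
  obtain ⟨c', hc', hac'⟩ := oplus_assoc hc (oplus_perp d)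
  have hbc' : b' = c' := perp_unique hab' hac'
  subst hbc'
  rw [oplus_comm] at hab'
  obtain ⟨x, hx, hbx⟩ := oplus_assoc hb' hab'
  obtain ⟨y, hy, hcy⟩ := oplus_assoc hc' hab'
  have hxy : x = y := Option.some.inj (hx.symm.trans hy)
  subst hxy
  rw [oplus_comm] at hbx hcy
  exact perp_unique hbx hcy

lemma le_perp_of_oplus {a b c : E} (h : oplus a b = some c) : le b (perp a) := by
  obtain ⟨d, hcd⟩ := exists_perp c
  obtain ⟨bd, hbd, habd⟩ := oplus_assoc h hcd
  exact ⟨d, by rwa [perp_unique (oplus_perp a) habd]⟩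

lemma exists_oplus_of_le_perp {a b : E} (h : le b (perp a)) : ∃ c, oplus a b = some c := by
  obtain ⟨d, hbd⟩ := h
  obtain ⟨ab, hab, -⟩ := oplus_assoc_symm hbd (oplus_perp a)
  exact ⟨ab, hab⟩

lemma exists_oplus_le_of_le {a b r s u : E} (har : le a r) (hbs : le b s)
    (hu : oplus r s = some u) : ∃ c, oplus a b = some c ∧ le c u := by
  obtain ⟨x, hx⟩ := har
  obtain ⟨y, hy⟩ := hbs
  obtain ⟨v, hv, hav⟩ := oplus_assoc hx hu
  rw [oplus_comm] at hv
  obtain ⟨g, -, hbg⟩ := oplus_assoc hy hv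
  obtain ⟨ab, hab, habg⟩ := oplus_assoc_symm hbg hav
  exact ⟨ab, hab, g, habg⟩

lemma exists_oplus_of_le_of_le_perp {a b q : E} (haq : le a q) (hbq : le b (perp q)) :
    ∃ c, oplus a b = some c := by
  obtain ⟨t, hqb⟩ := exists_oplus_of_le_perp hbq
  obtain ⟨c, hab, -⟩ := exists_oplus_le_of_le haq (EffectAlgebra.le_refl b) hqb
  exact ⟨c, hab⟩

lemma le_of_oplus_le_oplus_left {a b c d e : E} (hd : oplus a b = some d) (he : oplus a c = some e)
    (hde : le d e) : le b c := by
  obtain ⟨x, hdx⟩ := hde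
  obtain ⟨bx, hbx, habx⟩ := oplus_assoc hd hdx
  exact ⟨x, by rwa [oplus_left_cancel habx he] at hbx⟩

lemma le_perp_of_oplus_of_le_perp {r y q w p : E} (hq : oplus r y = some q)
    (hp : oplus r w = some p) (hw : le w (perp q)) : le y (perp p) := by
  obtain ⟨t, hqw⟩ := exists_oplus_of_le_perp hw
  rw [oplus_comm] at hq
  obtain ⟨v, hrw, hyrw⟩ := oplus_assoc hq hqw
  rw [Option.some.inj (hrw.symm.trans hp), oplus_comm] at hyrw
  exact le_perp_of_oplus hyrw

end EffectAlgebra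

namespace CompressionBase

open EffectAlgebra

variable {E : Type u} [EffectAlgebra E] (cb : CompressionBase E)

lemma J_le_focus {p : E} (hp : p ∈ cb.P) (a : E) : le (cb.J p a) p := by
  have h := cb.additive p hp a (perp a) one (oplus_perp a)
  rw [cb.focus p hp] at h
  exact ⟨cb.J p (perp a), h⟩

lemma mem_Cset_of_oplus {p x y q : E} (hp : p ∈ cb.P) (hxy : oplus x y = some q)
    (hx : le x p) (hy : le y (perp p)) : q ∈ cb.Cset p := by
  have hp' : perp p ∈ cb.P := cb.perp_mem p hp
  have hJp := cb.additive p hp x y q hxy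
  rw [cb.retraction p hp x hx, (cb.compression p hp y).mpr hy, oplus_zero] at hJp
  have hJp' := cb.additive (perp p) hp' x y q hxy
  rw [cb.retraction (perp p) hp' y hy,
    (cb.compression (perp p) hp' x).mpr (by rwa [perp_perp]), zero_oplus] at hJp'
  show oplus (cb.J p q) (cb.J (perp p) q) = some q
  rwa [← Option.some.inj hJp, ← Option.some.inj hJp']

variable {cb}

lemma IsProjCover.le_self {a p : E} (hp : cb.IsProjCover a p) : le a p :=
  (hp.2 p hp.1).mpr (EffectAlgebra.le_refl p)

lemma IsProjCover.le_of_le {a p q : E} (hp : cb.IsProjCover a p) (hq : q ∈ cb.P)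
    (haq : le a q) : le p q :=
  (hp.2 q hq).mp haq

lemma IsProjCover.le_of_oplus {a a₁ a₂ p r s u : E} (hp : cb.IsProjCover a p)
    (hr : cb.IsProjCover a₁ r) (hs : cb.IsProjCover a₂ s) (ha : oplus a₁ a₂ = some a)
    (hu : oplus r s = some u) : le p u := by
  obtain ⟨a', ha', ha'u⟩ := exists_oplus_le_of_le hr.le_self hs.le_self hu
  rw [← Option.some.inj (ha.symm.trans ha')] at ha'u
  exact hp.le_of_le (cb.oplus_mem r hr.1 s hs.1 u hu) ha'u

lemma IsProjCover.mem_Cset_of_mem_PC (hpc : cb.ProjCoverProp) {a p q : E}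
    (hp : cb.IsProjCover a p) (hq : q ∈ cb.PC a) : q ∈ cb.Cset p := by
  obtain ⟨hqP, hqa⟩ := hq
  have hqP' : perp q ∈ cb.P := cb.perp_mem q hqP
  obtain ⟨r, hr⟩ := hpc (cb.J q a)
  obtain ⟨s, hs⟩ := hpc (cb.J (perp q) a)
  have hrq : le r q := hr.le_of_le hqP (cb.J_le_focus hqP a)
  have hsq : le s (perp q) := hs.le_of_le hqP' (cb.J_le_focus hqP' a)
  obtain ⟨u, hu⟩ := exists_oplus_of_le_of_le_perp hrq hsq
  have hpu : le p u := hp.le_of_oplus hr hs hqa hu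
  have hrp : le r p := hr.le_of_le hp.1 (EffectAlgebra.le_trans ⟨_, hqa⟩ hp.le_self)
  obtain ⟨w, hw⟩ := hrp
  obtain ⟨y, hy⟩ := hrq
  have hws : le w s := le_of_oplus_le_oplus_left hw hu hpu
  exact cb.mem_Cset_of_oplus hp.1 hy ⟨w, hw⟩
    (le_perp_of_oplus_of_le_perp hy hw (EffectAlgebra.le_trans hws hsq))

end CompressionBase

open EffectAlgebra in
/-- In an effect algebra with a compression base having the projection
cover property, the projection cover of any element belongs to its P-bicommutant. -/
theorem stmt0 {E : Type u} [EffectAlgebra E] (cb : CompressionBase E)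
    (hpc : cb.ProjCoverProp) (a p : E) (hp : cb.IsProjCover a p) :
    p ∈ cb.Pbicomm a :=
  ⟨hp.1, cb.mem_Cset_of_oplus hp.1 (oplus_zero a) hp.le_self (EffectAlgebra.zero_le _),
    fun _ hq => hp.mem_Cset_of_mem_PC hpc hq⟩
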